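/- Let P have length m, T have length n ≤ 3m/2, Q have length q, and set d := δ_H(P, Q*) and, for 0 ≤ j ≤ (n−m)/q, h_j := δ_H(T[jq..jq+m), P). Then for each such j, h_j = δ_H(P,Q*) + δ_H(T[jq..jq+m), Q*) − μ_j, where μ_j is the total weight of pairs (τ, π) with τ ∈ Mis(T,Q*), π ∈ Mis(P,Q*), τ = jq + π, each pair weighted 2 − δ_H(P[π], T[τ]). -/

import Mathlib

open List

variable {α : Type*}

/-- The fragment S[i..j) of a string (list) S. -/
def frag (S : List α) (i j : ℕ) : List α := (S.drop i).take (j - i)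

/-- Q^∞[a..b): the fragment of the infinite repetition of Q from a (incl.) to b (excl.). -/
def repPrefix [Inhabited α] (Q : List α) (a b : ℕ) : List α :=
  (List.range' a (b - a)).map (fun i => Q.getD (i % Q.length) default)

/-- Hamming distance of two strings of the same length (counted over positions of S). -/
def hamming [DecidableEq α] [Inhabited α] (S T : List α) : ℕ :=
  ((Finset.range S.length).filter
    (fun i => S.getD i default ≠ T.getD i default)).card

/-- δ_H(S, Q*): Hamming distance of S to the length-|S| prefix of Q^∞. -/
def hammingStar [DecidableEq α] [Inhabited α] (S Q : List α) : ℕ :=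
  hamming S (repPrefix Q 0 S.length)

/-- Cost structure for edit distance (re-created: removed from Mathlib). -/
structure Levenshtein.Cost (α β δ : Type*) where
  delete : α → δ
  insert : β → δ
  substitute : α → β → δ

/-- Unit-cost edit operations (as in the old Mathlib `Levenshtein.defaultCost`). -/
def Levenshtein.defaultCost [DecidableEq α] : Levenshtein.Cost α α ℕ where
  delete _ := 1
  insert _ := 1
  substitute a b := if a = b then 0 else 1

/-- Levenshtein distance with costs `C` (re-created: removed from Mathlib). -/
def levenshtein {β δ : Type*} [AddZeroClass δ] [Min δ] (C : Levenshtein.Cost α β δ) :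
    List α → List β → δ
  | [], ys => (ys.map C.insert).sum
  | x :: xs, [] => C.delete x + levenshtein C xs []
  | x :: xs, y :: ys =>
      min (C.delete x + levenshtein C xs (y :: ys))
        (min (C.insert y + levenshtein C (x :: xs) ys) (C.substitute x y + levenshtein C xs ys))

/-- Edit (Levenshtein) distance. -/
def editDist [DecidableEq α] (S T : List α) : ℕ :=
  levenshtein Levenshtein.defaultCost S T

/-- A string is primitive if it is nonempty and not a proper power of a string. -/
def Primitive (Q : List α) : Prop :=
  Q ≠ [] ∧ ∀ (U : List α) (t : ℕ), 2 ≤ t → Q ≠ (List.replicate t U).flatten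

/-- p is a period of S. -/
def IsPeriod [Inhabited α] (p : ℕ) (S : List α) : Prop :=
  0 < p ∧ ∀ i, i + p < S.length → S.getD i default = S.getD (i + p) default

/-- per(S): the smallest period of S. -/
noncomputable def per [Inhabited α] (S : List α) : ℕ := sInf {p | IsPeriod p S}

/-- Occ^H_k(P,T): starting positions of k-mismatch occurrences of P in T. -/
def occH [DecidableEq α] [Inhabited α] (k : ℕ) (P T : List α) : Finset ℕ :=
  (Finset.range (T.length - P.length + 1)).filter
    (fun i => hamming P (frag T i (i + P.length)) ≤ k)

/-- Exact occurrences of B in T. -/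
def occExact [DecidableEq α] (B T : List α) : Finset ℕ :=
  (Finset.range (T.length + 1)).filter (fun i => frag T i (i + B.length) = B)

/-- Occ^E_k(P,T): starting positions of k-error (edit distance) occurrences of P in T. -/
def occE [DecidableEq α] (k : ℕ) (P T : List α) : Set ℕ :=
  {i | ∃ j, i ≤ j ∧ j ≤ T.length ∧ editDist P (frag T i j) ≤ k}

/-- δ_E^cyc(S,Q): minimum edit distance of S to any substring of Q^∞. -/
noncomputable def edCyc [DecidableEq α] [Inhabited α] (S Q : List α) : ℕ :=
  sInf {d | ∃ i j, i ≤ j ∧ d = editDist S (repPrefix Q i j)}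

/-- δ_E(S,Q*): minimum edit distance of S to a prefix of Q^∞. -/
noncomputable def edStar [DecidableEq α] [Inhabited α] (S Q : List α) : ℕ :=
  sInf {d | ∃ j, d = editDist S (repPrefix Q 0 j)}

/-- Minimum edit distance of T to a substring of Q^∞ starting at position x. -/
noncomputable def edStarAt [DecidableEq α] [Inhabited α] (T Q : List α) (x : ℕ) : ℕ :=
  sInf {d | ∃ j, x ≤ j ∧ d = editDist T (repPrefix Q x j)}

/-- Minimum edit distance of T to a substring of Q^∞ ending at a position ≡ y (mod |Q|). -/
noncomputable def edEndAt [DecidableEq α] [Inhabited α] (T Q : List α) (y : ℕ) : ℕ :=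
  sInf {d | ∃ i j, i ≤ j ∧ j % Q.length = y % Q.length ∧ d = editDist T (repPrefix Q i j)}

/-- Minimum edit distance of L to a substring of Q^∞ ending at a multiple of |Q|. -/
noncomputable def edEndMul [DecidableEq α] [Inhabited α] (L Q : List α) : ℕ :=
  sInf {d | ∃ i j, i ≤ j * Q.length ∧ d = editDist L (repPrefix Q i (j * Q.length))}

/-- The fragment S[i..j) of S is locked with respect to Q. -/
def Locked [DecidableEq α] [Inhabited α] (S Q : List α) (i j : ℕ) : Prop :=
  (∃ a : ℕ, edCyc (frag S i j) Q = editDist (frag S i j) (repPrefix Q 0 (a * Q.length))) ∨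
  (j = S.length ∧ edCyc (frag S i j) Q = edStar (frag S i j) Q) ∨
  (i = 0 ∧ edCyc (frag S i j) Q = edEndMul (frag S i j) Q) ∨
  (i = 0 ∧ j = S.length)

/-- rot^j(Q): rotation moving the last j (mod |Q|) characters to the front. -/
def rotR (Q : List α) (j : ℕ) : List α := Q.rotate (Q.length - j % Q.length)

/-- |Mis(T,Q*) ∩ [a,b)|. -/
def misCount [DecidableEq α] [Inhabited α] (T Q : List α) (a b : ℕ) : ℕ :=
  ((Finset.Ico a b).filter (fun i => i < T.length ∧
     T.getD i default ≠ Q.getD (i % Q.length) default)).card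

/-- μ_j: the total weight of aligned mismatch pairs of P and T against Q^∞ at shift j·|Q|:
a pair (τ = j|Q|+π, π) with π ∈ Mis(P,Q*), τ ∈ Mis(T,Q*) has weight 2 − δ_H(P[π],T[τ]). -/
def mu [DecidableEq α] [Inhabited α] (P T Q : List α) (j : ℕ) : ℕ :=
  ∑ π ∈ Finset.range P.length,
    if P.getD π default ≠ Q.getD (π % Q.length) default ∧
       j * Q.length + π < T.length ∧
       T.getD (j * Q.length + π) default ≠ Q.getD ((j * Q.length + π) % Q.length) default
    then (if P.getD π default = T.getD (j * Q.length + π) default then 2 else 1)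
    else 0

theorem length_frag (S : List α) {i j : ℕ} (hij : i ≤ j) (hj : j ≤ S.length) :
    (frag S i j).length = j - i := by
  simp only [frag, List.length_take, List.length_drop]
  omega

theorem getD_frag (S : List α) (i j : ℕ) {k : ℕ} (hk : k < j - i) (d : α) :
    (frag S i j).getD k d = S.getD (i + k) d := by
  simp [frag, List.getD_eq_getElem?_getD, hk]

theorem getD_repPrefix [Inhabited α] (Q : List α) (a b : ℕ) {i : ℕ} (hi : i < b - a) :
    (repPrefix Q a b).getD i default = Q.getD ((a + i) % Q.length) default := by
  simp [repPrefix, List.getD_eq_getElem?_getD, hi]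

theorem hamming_eq_sum [DecidableEq α] [Inhabited α] (S T : List α) :
    hamming S T = ∑ i ∈ Finset.range S.length,
      if S.getD i default ≠ T.getD i default then 1 else 0 :=
  Finset.card_filter _ _

theorem hammingStar_eq_sum [DecidableEq α] [Inhabited α] (S Q : List α) :
    hammingStar S Q = ∑ i ∈ Finset.range S.length,
      if S.getD i default ≠ Q.getD (i % Q.length) default then 1 else 0 := by
  rw [hammingStar, hamming_eq_sum]
  refine Finset.sum_congr rfl fun i hi => ?_
  rw [getD_repPrefix _ _ _ (by simpa using hi), zero_add]

-- The theorem is this identity summed over the positions π < m, with x = P[π], y = T[jq + π]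
-- and z = Q^∞[π] = Q^∞[jq + π].
theorem mismatch_add_weight [DecidableEq α] (x y z : α) :
    ((if y ≠ x then 1 else 0) + if x ≠ z ∧ y ≠ z then (if x = y then 2 else 1) else 0)
      = (if x ≠ z then 1 else 0) + (if y ≠ z then 1 else 0) := by
  by_cases hxz : x = z <;> by_cases hyz : y = z <;> by_cases hxy : x = y <;> simp_all [eq_comm]

theorem hj_identity_general {α : Type*} [DecidableEq α] [Inhabited α]
    (P T Q : List α) (m n j : ℕ)
    (hP : P.length = m) (hT : T.length = n) (hj : j * Q.length + m ≤ n) :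
    hamming (frag T (j * Q.length) (j * Q.length + m)) P + mu P T Q j
      = hammingStar P Q + hammingStar (frag T (j * Q.length) (j * Q.length + m)) Q := by
  have hlen : (frag T (j * Q.length) (j * Q.length + m)).length = m := by
    rw [length_frag T (Nat.le_add_right _ _) (hT ▸ hj)]
    omega
  rw [hamming_eq_sum, hammingStar_eq_sum, hammingStar_eq_sum, mu, hlen, hP,
    ← Finset.sum_add_distrib, ← Finset.sum_add_distrib]
  refine Finset.sum_congr rfl fun i hi => ?_
  have hi : i < m := Finset.mem_range.mp hi
  have hshift : (j * Q.length + i) % Q.length = i % Q.length := by simp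
  rw [getD_frag _ _ _ (by omega), hshift]
  simpa only [show j * Q.length + i < T.length by omega, true_and] using
    mismatch_add_weight (P.getD i default) (T.getD (j * Q.length + i) default)
      (Q.getD (i % Q.length) default)

/-- h_j = δ_H(P,Q*) + δ_H(T[jq..jq+m),Q*) − μ_j, stated additively. -/
theorem hj_identity {α : Type*} [DecidableEq α] [Inhabited α]
    (P T Q : List α) (m n j : ℕ)
    (hP : P.length = m) (hT : T.length = n) (hq : Q ≠ [])
    (hmn : m ≤ n) (hn : 2 * n ≤ 3 * m) (hj : j * Q.length + m ≤ n) :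
    hamming (frag T (j * Q.length) (j * Q.length + m)) P + mu P T Q j
      = hammingStar P Q + hammingStar (frag T (j * Q.length) (j * Q.length + m)) Q :=
  hj_identity_general P T Q m n j hP hT hj
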